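/- arXiv:1704.03411 — 4 statements merged into one kernel-verified Lean document; each statement's English description precedes it below -/
import Mathlib

section
/- Let {A_k} be norming sets for polynomials of degree at most k on a compact set E with constants C_k, let μ_k be the uniform probability measure on A_k, and let B_k be the Bergman function of degree k for μ_k. Then ‖B_k‖_E ≤ C_k²·‖B_k‖_{A_k}, where ‖·‖_E and ‖·‖_{A_k} denote sup norms on E and A_k respectively. -/
set_option maxHeartbeats 1000000


open MvPolynomial

/-- For a norming set `A` of constant `C` for degree-≤k polynomials on `E`, the
Bergman function of the uniform probability measure on `A` satisfies
`‖B‖_E ≤ C² ‖B‖_A`. -/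
theorem stmt3 {n k N : ℕ} (E : Set (Fin n → ℂ)) (hE : IsCompact E)
    (A : Finset (Fin n → ℂ)) (hAE : ↑A ⊆ E) (hA : A.Nonempty)
    (C : ℝ) (hC : 0 < C)
    (hnorm : ∀ p : MvPolynomial (Fin n) ℂ, p.totalDegree ≤ k →
      ∀ z ∈ E, ‖eval z p‖ ≤ C * A.sup' hA fun a => ‖eval a p‖)
    (q : Fin N → MvPolynomial (Fin n) ℂ)
    (hdeg : ∀ j, (q j).totalDegree ≤ k)
    (horth : ∀ i j, (A.card : ℂ)⁻¹ *
        ∑ a ∈ A, eval a (q i) * (starRingEnd ℂ) (eval a (q j))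
      = if i = j then 1 else 0) :
    ∀ z ∈ E, ∑ j, ‖eval z (q j)‖ ^ 2
      ≤ C ^ 2 * A.sup' hA fun a => ∑ j, ‖eval a (q j)‖ ^ 2 := by
  intro z hz
  set S : ℝ := A.sup' hA fun a => ∑ j, ‖eval a (q j)‖ ^ 2 with hS
  set B : ℝ := ∑ j, ‖eval z (q j)‖ ^ 2 with hB
  obtain ⟨a0, ha0⟩ := hA
  have hSnonneg : 0 ≤ S := le_trans (by positivity) (Finset.le_sup' _ ha0)
  have hBnonneg : 0 ≤ B := by positivity
  -- the extremal polynomial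
  set p : MvPolynomial (Fin n) ℂ :=
    ∑ j, ((starRingEnd ℂ) (eval z (q j))) • q j with hp
  have hpdeg : p.totalDegree ≤ k := by
    refine le_trans (totalDegree_finset_sum _ _) (Finset.sup_le fun j _ => ?_)
    exact le_trans (totalDegree_smul_le _ _) (hdeg j)
  have hevalp : ∀ w, eval w p = ∑ j, (starRingEnd ℂ) (eval z (q j)) * eval w (q j) := by
    intro w
    simp [hp, smul_eq_mul]
  have hpz : ‖eval z p‖ = B := by
    have : eval z p = (B : ℂ) := by
      rw [hevalp]
      push_cast [hB]
      refine Finset.sum_congr rfl fun j _ => ?_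
      rw [mul_comm, Complex.mul_conj']
    rw [this, Complex.norm_real, Real.norm_of_nonneg hBnonneg]
  -- Cauchy-Schwarz bound on A
  have hCS : ∀ a ∈ A, ‖eval a p‖ ≤ Real.sqrt B * Real.sqrt S := by
    intro a ha
    rw [hevalp]
    calc ‖∑ j, (starRingEnd ℂ) (eval z (q j)) * eval a (q j)‖
        ≤ ∑ j, ‖(starRingEnd ℂ) (eval z (q j)) * eval a (q j)‖ := norm_sum_le _ _
      _ = ∑ j, ‖eval z (q j)‖ * ‖eval a (q j)‖ := by
          simp [norm_mul]
      _ ≤ Real.sqrt (∑ j, ‖eval z (q j)‖ ^ 2) * Real.sqrt (∑ j, ‖eval a (q j)‖ ^ 2) :=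
          Real.sum_mul_le_sqrt_mul_sqrt Finset.univ (fun j => ‖eval z (q j)‖) (fun j => ‖eval a (q j)‖)
      _ ≤ Real.sqrt B * Real.sqrt S := by
          rw [hB]
          have hle : (∑ j, ‖eval a (q j)‖ ^ 2) ≤ S :=
            Finset.le_sup' (fun a => ∑ j, ‖eval a (q j)‖ ^ 2) ha
          exact mul_le_mul_of_nonneg_left (Real.sqrt_le_sqrt hle) (Real.sqrt_nonneg _)
  have hsup : (A.sup' ⟨a0, ha0⟩ fun a => ‖eval a p‖) ≤ Real.sqrt B * Real.sqrt S :=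
    Finset.sup'_le _ _ hCS
  have hmain : B ≤ C * (Real.sqrt B * Real.sqrt S) := by
    calc B = ‖eval z p‖ := hpz.symm
      _ ≤ C * A.sup' ⟨a0, ha0⟩ fun a => ‖eval a p‖ := hnorm p hpdeg z hz
      _ ≤ C * (Real.sqrt B * Real.sqrt S) := by
          exact mul_le_mul_of_nonneg_left hsup hC.le
  -- conclude
  have hsqB : Real.sqrt B ≤ C * Real.sqrt S := by
    rcases eq_or_lt_of_le hBnonneg with h0 | h0
    · rw [← h0, Real.sqrt_zero]; positivity
    · have hBsq : Real.sqrt B * Real.sqrt B = B := Real.mul_self_sqrt hBnonneg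
      have : Real.sqrt B * Real.sqrt B ≤ Real.sqrt B * (C * Real.sqrt S) := by
        rw [hBsq]; linarith [hmain]
      exact le_of_mul_le_mul_left (by linarith [this]) (Real.sqrt_pos.2 h0)
  calc B = Real.sqrt B * Real.sqrt B := (Real.mul_self_sqrt hBnonneg).symm
    _ ≤ (C * Real.sqrt S) * (C * Real.sqrt S) := by
        exact mul_le_mul hsqB hsqB (Real.sqrt_nonneg _) (by positivity)
    _ = C ^ 2 * (Real.sqrt S * Real.sqrt S) := by ring
    _ = C ^ 2 * S := by rw [Real.mul_self_sqrt hSnonneg]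
end

section
/- Let {μ_k} be a sequence of probability measures on a compact set E with card(supp μ_k) = O(k^s) for some s, and suppose the Bergman functions satisfy ‖B_k‖_E = O(k^t) for some t. Then the sets supp μ_k form a weakly admissible mesh for E; more precisely, for every polynomial p of degree at most k, ‖p‖_E ≤ √(‖B_k‖_E)·‖p‖_{supp μ_k}. -/
open MvPolynomial

/-- If `μ` is a probability measure with finite support `A ⊆ E` and `B` is its
degree-k Bergman function, then for every polynomial `p` of degree at most `k`,
`‖p‖_E ≤ √(‖B‖_E) ‖p‖_A`; in particular the supports form a weakly admissible
mesh when `card A` and `‖B‖_E` grow polynomially. -/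
theorem stmt5 {n k N : ℕ} (E : Set (Fin n → ℂ)) (hE : IsCompact E)
    (A : Finset (Fin n → ℂ)) (hAE : ↑A ⊆ E) (hA : A.Nonempty)
    (w : (Fin n → ℂ) → ℝ) (hw : ∀ a ∈ A, 0 < w a) (hw1 : ∑ a ∈ A, w a = 1)
    (q : Fin N → MvPolynomial (Fin n) ℂ)
    (hdeg : ∀ j, (q j).totalDegree ≤ k)
    (horth : ∀ i j, ∑ a ∈ A,
        (w a : ℂ) * (eval a (q i) * (starRingEnd ℂ) (eval a (q j)))
      = if i = j then 1 else 0)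
    (hspan : ∀ p : MvPolynomial (Fin n) ℂ, p.totalDegree ≤ k →
      p ∈ Submodule.span ℂ (Set.range q)) :
    ∀ p : MvPolynomial (Fin n) ℂ, p.totalDegree ≤ k → ∀ z ∈ E,
      ‖eval z p‖ ≤ Real.sqrt (sSup ((fun ζ => ∑ j, ‖eval ζ (q j)‖ ^ 2) '' E)) *
        A.sup' hA fun a => ‖eval a p‖ := by
  intro p hpk z hz
  obtain ⟨c, hc⟩ := (Submodule.mem_span_range_iff_exists_fun ℂ).mp (hspan p hpk)
  have hp : ∀ a, eval a p = ∑ i, c i * eval a (q i) := by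
    intro a
    rw [← hc, map_sum]
    exact Finset.sum_congr rfl fun i _ => by rw [smul_eq_C_mul, map_mul, eval_C]
  set M : ℝ := A.sup' hA fun a => ‖eval a p‖ with hM
  have hM0 : 0 ≤ M := by
    obtain ⟨a, ha⟩ := hA
    exact le_trans (norm_nonneg (eval a p)) (Finset.le_sup' (fun a => ‖eval a p‖) ha)
  -- key identity
  have key : ∑ a ∈ A, (w a : ℂ) * (eval a p * (starRingEnd ℂ) (eval a p))
      = ∑ i, c i * (starRingEnd ℂ) (c i) := by
    have step1 : ∀ a ∈ A, (w a : ℂ) * (eval a p * (starRingEnd ℂ) (eval a p))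
        = ∑ i, ∑ j, (c i * (starRingEnd ℂ) (c j)) *
            ((w a : ℂ) * (eval a (q i) * (starRingEnd ℂ) (eval a (q j)))) := by
      intro a _
      rw [hp a]
      simp only [map_sum, map_mul, Finset.mul_sum, Finset.sum_mul]
      rw [Finset.sum_comm]
      apply Finset.sum_congr rfl
      intro i _
      apply Finset.sum_congr rfl
      intro j _
      ring
    rw [Finset.sum_congr rfl step1, Finset.sum_comm]
    refine Finset.sum_congr rfl fun i _ => ?_
    rw [Finset.sum_comm]
    have h1 : ∀ j, ∑ a ∈ A, (c i * (starRingEnd ℂ) (c j)) *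
        ((w a : ℂ) * (eval a (q i) * (starRingEnd ℂ) (eval a (q j))))
        = (c i * (starRingEnd ℂ) (c j)) * (if i = j then 1 else 0) := by
      intro j
      rw [← Finset.mul_sum, horth i j]
    simp only [h1, mul_ite, mul_one, mul_zero, Finset.sum_ite_eq, Finset.mem_univ, if_true]
  -- real version
  have hT : (∑ i, ‖c i‖ ^ 2 : ℝ) = ∑ a ∈ A, w a * ‖eval a p‖ ^ 2 := by
    have conj_sq : ∀ x : ℂ, x * (starRingEnd ℂ) x = ((‖x‖ ^ 2 : ℝ) : ℂ) := by
      intro x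
      rw [Complex.mul_conj]
      norm_cast
      rw [Complex.normSq_eq_norm_sq]
    apply Complex.ofReal_injective
    push_cast
    calc (∑ i, (‖c i‖ : ℂ) ^ 2)
        = ∑ i, c i * (starRingEnd ℂ) (c i) := by
          refine Finset.sum_congr rfl fun i _ => ?_
          rw [conj_sq]; push_cast; ring
      _ = ∑ a ∈ A, (w a : ℂ) * (eval a p * (starRingEnd ℂ) (eval a p)) := key.symm
      _ = ∑ a ∈ A, (w a : ℂ) * (‖eval a p‖ : ℂ) ^ 2 := by
          refine Finset.sum_congr rfl fun a _ => ?_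
          rw [conj_sq]; push_cast; ring
  -- bound sum of |c|^2 by M^2
  have hc2 : (∑ i, ‖c i‖ ^ 2 : ℝ) ≤ M ^ 2 := by
    rw [hT]
    calc ∑ a ∈ A, w a * ‖eval a p‖ ^ 2
        ≤ ∑ a ∈ A, w a * M ^ 2 := by
          refine Finset.sum_le_sum fun a ha => ?_
          have hle : ‖eval a p‖ ≤ M := Finset.le_sup' (fun a => ‖eval a p‖) ha
          exact mul_le_mul_of_nonneg_left
            (pow_le_pow_left₀ (norm_nonneg _) hle 2) (hw a ha).le
      _ = M ^ 2 := by rw [← Finset.sum_mul, hw1, one_mul]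
  -- Bergman function value at z
  set Bz : ℝ := ∑ j, ‖eval z (q j)‖ ^ 2 with hBz
  have hBz0 : 0 ≤ Bz := Finset.sum_nonneg fun j _ => sq_nonneg _
  -- Cauchy–Schwarz
  have hCS : ‖eval z p‖ ≤ Real.sqrt (∑ i, ‖c i‖ ^ 2) * Real.sqrt Bz := by
    have h1 : ‖eval z p‖ ≤ ∑ i, ‖c i‖ * ‖eval z (q i)‖ := by
      rw [hp z]
      refine le_trans (norm_sum_le _ _) (le_of_eq ?_)
      exact Finset.sum_congr rfl fun i _ => norm_mul _ _
    have h2 : (∑ i, ‖c i‖ * ‖eval z (q i)‖) ^ 2 ≤ (∑ i, ‖c i‖ ^ 2) * Bz :=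
      Finset.sum_mul_sq_le_sq_mul_sq _ _ _
    have h3 : (∑ i, ‖c i‖ * ‖eval z (q i)‖)
        ≤ Real.sqrt (∑ i, ‖c i‖ ^ 2) * Real.sqrt Bz := by
      have h0 : 0 ≤ ∑ i, ‖c i‖ * ‖eval z (q i)‖ :=
        Finset.sum_nonneg fun i _ => mul_nonneg (norm_nonneg _) (norm_nonneg _)
      calc ∑ i, ‖c i‖ * ‖eval z (q i)‖
          = Real.sqrt ((∑ i, ‖c i‖ * ‖eval z (q i)‖) ^ 2) := (Real.sqrt_sq h0).symm
        _ ≤ Real.sqrt ((∑ i, ‖c i‖ ^ 2) * Bz) := Real.sqrt_le_sqrt h2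
        _ = Real.sqrt (∑ i, ‖c i‖ ^ 2) * Real.sqrt Bz :=
            Real.sqrt_mul (Finset.sum_nonneg fun i _ => sq_nonneg _) _
    exact le_trans h1 h3
  -- bound Bz by sSup over E
  have hBsup : Bz ≤ sSup ((fun ζ => ∑ j, ‖eval ζ (q j)‖ ^ 2) '' E) := by
    have hcont : Continuous fun ζ : Fin n → ℂ => ∑ j, ‖eval ζ (q j)‖ ^ 2 := by
      refine continuous_finset_sum _ fun j _ => ?_
      exact ((q j).continuous_eval.norm).pow 2
    exact le_csSup ((hE.image hcont).bddAbove) ⟨z, hz, rfl⟩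
  have hsup0 : 0 ≤ sSup ((fun ζ => ∑ j, ‖eval ζ (q j)‖ ^ 2) '' E) := le_trans hBz0 hBsup
  calc ‖eval z p‖ ≤ Real.sqrt (∑ i, ‖c i‖ ^ 2) * Real.sqrt Bz := hCS
    _ ≤ M * Real.sqrt (sSup ((fun ζ => ∑ j, ‖eval ζ (q j)‖ ^ 2) '' E)) := by
        refine mul_le_mul ?_ (Real.sqrt_le_sqrt hBsup) (Real.sqrt_nonneg _) hM0
        calc Real.sqrt (∑ i, ‖c i‖ ^ 2) ≤ Real.sqrt (M ^ 2) := Real.sqrt_le_sqrt hc2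
          _ = M := Real.sqrt_sq hM0
    _ = Real.sqrt (sSup ((fun ζ => ∑ j, ‖eval ζ (q j)‖ ^ 2) '' E)) * M := mul_comm _ _
end

section
/- Let μ be a probability measure supported on a compact set E. Then for the graded lexicographic monomial basis, det G_k(μ, M_k) ≤ (max_{ζ₁,…,ζ_N ∈ E} |Vdm_k(ζ₁,…,ζ_N)|)², where G_k is the Gram matrix of the monomials in L²(μ) and Vdm_k the Vandermonde determinant. -/
open MvPolynomial MeasureTheory

section helpers

variable {X : Type*} [MeasurableSpace X]

lemma helper_prod_integrable (μ : Measure X) [SigmaFinite μ] {N : ℕ}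
    (f : Fin N → X → ℂ) (hf : ∀ i, Integrable (f i) μ) :
    Integrable (fun z : Fin N → X => ∏ i, f i (z i)) (Measure.pi fun _ => μ) := by
  letI : MeasureSpace X := { volume := μ }
  exact Integrable.fintype_prod hf

lemma helper_prod_integral (μ : Measure X) [SigmaFinite μ] {N : ℕ}
    (f : Fin N → X → ℂ) :
    ∫ z : Fin N → X, ∏ i, f i (z i) ∂(Measure.pi fun _ => μ) = ∏ i, ∫ x, f i x ∂μ := by
  letI : MeasureSpace X := { volume := μ }
  exact integral_fintype_prod_eq_prod f

lemma helper_perm (μ : Measure X) [SigmaFinite μ] {N : ℕ} (τ : Equiv.Perm (Fin N))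
    (F : (Fin N → X) → ℂ) :
    ∫ z : Fin N → X, F z ∂(Measure.pi fun _ => μ)
      = ∫ z : Fin N → X, F (z ∘ τ) ∂(Measure.pi fun _ => μ) := by
  have h := MeasureTheory.measurePreserving_piCongrLeft (fun _ : Fin N => μ) τ.symm
  have key : ∀ z : Fin N → X,
      (MeasurableEquiv.piCongrLeft (fun _ : Fin N => X) τ.symm) z = z ∘ τ := by
    intro z; funext j
    have h2 := Equiv.piCongrLeft_apply_apply (fun _ : Fin N => X) τ.symm z (τ j)
    simpa [MeasurableEquiv.coe_piCongrLeft] using h2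
  rw [← h.integral_comp']
  simp only [key]

end helpers

section andreief

variable {X : Type*} [MeasurableSpace X]

local notation "εc " σ:arg => ((Equiv.Perm.sign σ : ℤ) : ℂ)

lemma helper_det_sum {N : ℕ} (g : Fin N → X → ℂ) (z : Fin N → X) :
    (Matrix.of fun i j => g i (z j)).det
      = ∑ σ : Equiv.Perm (Fin N), εc σ * ∏ i, g (σ i) (z i) := by
  rw [Matrix.det_apply']
  rfl

lemma helper_conj_det {N : ℕ} (g : Fin N → X → ℂ) (z : Fin N → X) :
    (starRingEnd ℂ) ((Matrix.of fun i j => g i (z j)).det)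
      = ∑ τ : Equiv.Perm (Fin N), εc τ * ∏ i, (starRingEnd ℂ) (g (τ⁻¹ i) (z i)) := by
  rw [helper_det_sum, map_sum]
  refine Fintype.sum_equiv (Equiv.inv (Equiv.Perm (Fin N))) _ _ ?_
  intro σ
  simp only [map_mul, map_prod, map_intCast, Equiv.inv_apply]
  simp [Equiv.Perm.sign_inv]

lemma helper_expand {N : ℕ} (g : Fin N → X → ℂ) (b : Fin N → Fin N) (z : Fin N → X) :
    (Matrix.of fun i j => g i (z j)).det * ∏ i, (starRingEnd ℂ) (g (b i) (z i))
      = ∑ σ : Equiv.Perm (Fin N),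
          εc σ * ∏ i, (g (σ i) (z i) * (starRingEnd ℂ) (g (b i) (z i))) := by
  rw [helper_det_sum, Finset.sum_mul]
  refine Finset.sum_congr rfl fun σ _ => ?_
  rw [mul_assoc, ← Finset.prod_mul_distrib]

lemma helper_int_expand {N : ℕ} (μ : Measure X) [SigmaFinite μ] (g : Fin N → X → ℂ)
    (hInt : ∀ i j, Integrable (fun x => g i x * (starRingEnd ℂ) (g j x)) μ)
    (b : Fin N → Fin N) :
    Integrable (fun z : Fin N → X =>
      (Matrix.of fun i j => g i (z j)).det * ∏ i, (starRingEnd ℂ) (g (b i) (z i)))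
      (Measure.pi fun _ => μ) := by
  simp only [helper_expand]
  exact integrable_finset_sum _ fun σ _ =>
    (helper_prod_integrable μ _ (fun i => hInt (σ i) (b i))).const_mul _

lemma helper_andreief {N : ℕ} (μ : Measure X) [SigmaFinite μ] (g : Fin N → X → ℂ)
    (hInt : ∀ i j, Integrable (fun x => g i x * (starRingEnd ℂ) (g j x)) μ) :
    ((Nat.factorial N : ℕ) : ℂ) * (Matrix.of fun i j => ∫ x, g i x * (starRingEnd ℂ) (g j x) ∂μ).det
      = ∫ z : Fin N → X, (Matrix.of fun i j => g i (z j)).det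
          * (starRingEnd ℂ) ((Matrix.of fun i j => g i (z j)).det)
          ∂(Measure.pi fun _ => μ) := by
  set ν : Measure (Fin N → X) := Measure.pi fun _ => μ with hν
  -- Step 1 : det G = ∫ det(g i (z j)) * ∏ conj (g i (z i)) dν
  have h1 : (Matrix.of fun i j => ∫ x, g i x * (starRingEnd ℂ) (g j x) ∂μ).det
      = ∫ z : Fin N → X, (Matrix.of fun i j => g i (z j)).det
          * ∏ i, (starRingEnd ℂ) (g i (z i)) ∂ν := by
    rw [Matrix.det_apply']
    have hcol : ∀ σ : Equiv.Perm (Fin N),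
        (∏ i, (Matrix.of fun i j => ∫ x, g i x * (starRingEnd ℂ) (g j x) ∂μ) (σ i) i)
          = ∫ z : Fin N → X, ∏ i, (g (σ i) (z i) * (starRingEnd ℂ) (g i (z i))) ∂ν := by
      intro σ
      rw [helper_prod_integral μ (fun i x => g (σ i) x * (starRingEnd ℂ) (g i x))]
      rfl
    calc (∑ σ : Equiv.Perm (Fin N),
        εc σ * ∏ i, (Matrix.of fun i j => ∫ x, g i x * (starRingEnd ℂ) (g j x) ∂μ) (σ i) i)
        = ∑ σ : Equiv.Perm (Fin N),
            ∫ z : Fin N → X, εc σ * ∏ i, (g (σ i) (z i) * (starRingEnd ℂ) (g i (z i))) ∂ν := by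
          refine Finset.sum_congr rfl fun σ _ => ?_
          rw [hcol σ, integral_const_mul]
      _ = ∫ z : Fin N → X, ∑ σ : Equiv.Perm (Fin N),
            εc σ * ∏ i, (g (σ i) (z i) * (starRingEnd ℂ) (g i (z i))) ∂ν := by
          refine (integral_finset_sum _ fun σ _ => ?_).symm
          exact (helper_prod_integrable μ _ (fun i => hInt (σ i) i)).const_mul _
      _ = _ := by
          refine integral_congr_ae (Filter.Eventually.of_forall fun z => ?_)
          beta_reduce
          exact (helper_expand g (fun i => i) z).symm
  -- Step 2 : symmetrize over permutations
  have h2 : ∀ τ : Equiv.Perm (Fin N),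
      (Matrix.of fun i j => ∫ x, g i x * (starRingEnd ℂ) (g j x) ∂μ).det
        = ∫ z : Fin N → X, εc τ * ((Matrix.of fun i j => g i (z j)).det
            * ∏ i, (starRingEnd ℂ) (g (τ⁻¹ i) (z i))) ∂ν := by
    intro τ
    rw [h1, hν, helper_perm μ τ]
    refine integral_congr_ae (Filter.Eventually.of_forall fun z => ?_)
    beta_reduce
    have hdet : (Matrix.of fun i j => g i ((z ∘ τ) j)).det
        = εc τ * (Matrix.of fun i j => g i (z j)).det := by
      have hsub : (Matrix.of fun i j => g i ((z ∘ τ) j))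
          = (Matrix.of fun i j => g i (z j)).submatrix id ⇑τ := rfl
      rw [hsub, Matrix.det_permute']
    have hprod : (∏ i, (starRingEnd ℂ) (g i ((z ∘ τ) i)))
        = ∏ i, (starRingEnd ℂ) (g (τ⁻¹ i) (z i)) := by
      refine Fintype.prod_equiv τ _ _ fun i => ?_
      simp
    rw [hdet, hprod]
    ring
  -- Step 3 : sum over τ
  have hcard : (Fintype.card (Equiv.Perm (Fin N)) : ℂ) = ((Nat.factorial N : ℕ) : ℂ) := by
    rw [Fintype.card_perm, Fintype.card_fin]
  calc ((Nat.factorial N : ℕ) : ℂ) * (Matrix.of fun i j => ∫ x, g i x * (starRingEnd ℂ) (g j x) ∂μ).det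
      = ∑ τ : Equiv.Perm (Fin N),
          (Matrix.of fun i j => ∫ x, g i x * (starRingEnd ℂ) (g j x) ∂μ).det := by
        rw [Finset.sum_const, Finset.card_univ, nsmul_eq_mul, hcard]
    _ = ∑ τ : Equiv.Perm (Fin N), ∫ z : Fin N → X,
          εc τ * ((Matrix.of fun i j => g i (z j)).det
            * ∏ i, (starRingEnd ℂ) (g (τ⁻¹ i) (z i))) ∂ν := by
        exact Finset.sum_congr rfl fun τ _ => h2 τ
    _ = ∫ z : Fin N → X, ∑ τ : Equiv.Perm (Fin N),
          εc τ * ((Matrix.of fun i j => g i (z j)).det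
            * ∏ i, (starRingEnd ℂ) (g (τ⁻¹ i) (z i))) ∂ν := by
        refine (integral_finset_sum _ fun τ _ => ?_).symm
        exact (helper_int_expand μ g hInt (fun i => τ⁻¹ i)).const_mul _
    _ = _ := by
        refine integral_congr_ae (Filter.Eventually.of_forall fun z => ?_)
        beta_reduce
        rw [helper_conj_det, Finset.mul_sum]
        refine Finset.sum_congr rfl fun τ _ => ?_
        ring

lemma helper_int_ff {N : ℕ} (μ : Measure X) [SigmaFinite μ] (g : Fin N → X → ℂ)
    (hInt : ∀ i j, Integrable (fun x => g i x * (starRingEnd ℂ) (g j x)) μ) :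
    Integrable (fun z : Fin N → X => (Matrix.of fun i j => g i (z j)).det
      * (starRingEnd ℂ) ((Matrix.of fun i j => g i (z j)).det)) (Measure.pi fun _ => μ) := by
  have heq : (fun z : Fin N → X => (Matrix.of fun i j => g i (z j)).det
      * (starRingEnd ℂ) ((Matrix.of fun i j => g i (z j)).det))
      = fun z => ∑ τ : Equiv.Perm (Fin N),
          εc τ * ((Matrix.of fun i j => g i (z j)).det
            * ∏ i, (starRingEnd ℂ) (g (τ⁻¹ i) (z i))) := by
    funext z
    rw [helper_conj_det, Finset.mul_sum]
    refine Finset.sum_congr rfl fun τ _ => ?_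
    ring
  rw [heq]
  exact integrable_finset_sum _ fun τ _ =>
    (helper_int_expand μ g hInt (fun i => τ⁻¹ i)).const_mul _

end andreief

/-- For a probability measure `μ` supported on the compact set `E`, the Gram
determinant is dominated by the square of the maximal Vandermonde determinant:
`det G_k(μ) ≤ (max_{ζ's ∈ E} |Vdm_k(ζ₁,…,ζ_N)|)²`. -/
theorem stmt12 {n k N : ℕ} (E : Set (Fin n → ℂ)) (hE : IsCompact E)
    (hEne : E.Nonempty)
    (μ : Measure (Fin n → ℂ)) [IsProbabilityMeasure μ]
    (hsupp : ∀ᵐ z ∂μ, z ∈ E)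
    (e : Fin N → MvPolynomial (Fin n) ℂ)
    (hdeg : ∀ i, (e i).totalDegree ≤ k)
    (hInt : ∀ i j, Integrable
      (fun z => eval z (e i) * (starRingEnd ℂ) (eval z (e j))) μ) :
    ‖(Matrix.of fun i j =>
        ∫ z, eval z (e i) * (starRingEnd ℂ) (eval z (e j)) ∂μ).det‖
      ≤ (sSup {x : ℝ | ∃ ζ : Fin N → (Fin n → ℂ), (∀ j, ζ j ∈ E) ∧
          x = ‖(Matrix.of fun i j => eval (ζ j) (e i)).det‖}) ^ 2 := by
  classical
  set g : Fin N → (Fin n → ℂ) → ℂ := fun i z => eval z (e i) with hg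
  set ν : Measure (Fin N → (Fin n → ℂ)) := Measure.pi fun _ => μ with hν
  haveI hνprob : IsProbabilityMeasure ν := by rw [hν]; infer_instance
  set f : (Fin N → (Fin n → ℂ)) → ℂ :=
    fun z => (Matrix.of fun i j => g i (z j)).det with hf
  set S : Set ℝ := {x : ℝ | ∃ ζ : Fin N → (Fin n → ℂ), (∀ j, ζ j ∈ E) ∧
      x = ‖(Matrix.of fun i j => eval (ζ j) (e i)).det‖} with hS
  set M : ℝ := sSup S with hMdef
  -- basic facts about `S` and `M`
  obtain ⟨z₀, hz₀⟩ := hEne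
  have hSne : S.Nonempty := ⟨_, fun _ => z₀, fun _ => hz₀, rfl⟩
  have hcont : Continuous fun ζ : Fin N → (Fin n → ℂ) =>
      ‖(Matrix.of fun i j => eval (ζ j) (e i)).det‖ := by
    refine Continuous.norm (Continuous.matrix_det ?_)
    exact continuous_pi fun i => continuous_pi fun j =>
      (MvPolynomial.continuous_eval (e i)).comp (continuous_apply j)
  have hSbdd : BddAbove S := by
    have hK : IsCompact (Set.pi Set.univ (fun _ : Fin N => E)) :=
      isCompact_univ_pi fun _ => hE
    refine BddAbove.mono ?_ (hK.image hcont).bddAbove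
    rintro x ⟨ζ, hζ, rfl⟩
    exact ⟨ζ, fun j _ => hζ j, rfl⟩
  have hM0 : 0 ≤ M := by
    refine le_trans (norm_nonneg ((Matrix.of fun i j => eval ((fun _ => z₀) j) (e i)).det)) ?_
    exact le_csSup hSbdd ⟨fun _ => z₀, fun _ => hz₀, rfl⟩
  -- almost everywhere the points are in `E`
  have hEc : μ Eᶜ = 0 := by
    have := hsupp
    rw [MeasureTheory.ae_iff] at this
    exact this
  set B : Set (Fin n → ℂ) := MeasureTheory.toMeasurable μ Eᶜ with hB
  have hBmeas : MeasurableSet B := measurableSet_toMeasurable μ Eᶜ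
  have hB0 : μ B = 0 := by rw [hB, measure_toMeasurable]; exact hEc
  have hBE : Eᶜ ⊆ B := subset_toMeasurable μ Eᶜ
  have hae : ∀ᵐ z ∂ν, ∀ j, z j ∈ E := by
    rw [MeasureTheory.ae_all_iff]
    intro j
    have hset : {z : Fin N → (Fin n → ℂ) | z j ∈ B}
        = Set.pi Set.univ (fun i => if i = j then B else Set.univ) := by
      ext z
      simp only [Set.mem_setOf_eq, Set.mem_pi, Set.mem_univ, forall_true_left]
      constructor
      · intro h i
        by_cases hij : i = j
        · subst hij; simp [h]
        · simp [hij]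
      · intro h
        simpa using h j
    have hnull : ν {z : Fin N → (Fin n → ℂ) | z j ∈ B} = 0 := by
      rw [hν, hset, MeasureTheory.Measure.pi_pi]
      refine Finset.prod_eq_zero (Finset.mem_univ j) ?_
      simp [hB0]
    have hBae : ∀ᵐ z ∂ν, z j ∉ B := by
      rw [MeasureTheory.ae_iff]
      simpa using hnull
    filter_upwards [hBae] with z hz
    by_contra h
    exact hz (hBE h)
  have haef : ∀ᵐ z ∂ν, ‖f z‖ ≤ M := by
    filter_upwards [hae] with z hz
    exact le_csSup hSbdd ⟨z, hz, rfl⟩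
  -- the Andréief identity
  have hand := helper_andreief μ g hInt
  have hff := helper_int_ff μ g hInt
  rw [← hν] at hand hff
  -- express the right-hand side as a real integral
  have hmc : ∀ z, f z * (starRingEnd ℂ) (f z) = ((‖f z‖ ^ 2 : ℝ) : ℂ) := by
    intro z
    rw [Complex.mul_conj]
    norm_cast
    rw [← Complex.sq_norm]
  have hreal : (∫ z, f z * (starRingEnd ℂ) (f z) ∂ν)
      = ((∫ z, ‖f z‖ ^ 2 ∂ν : ℝ) : ℂ) :=
    calc (∫ z, f z * (starRingEnd ℂ) (f z) ∂ν)
        = ∫ z, ((‖f z‖ ^ 2 : ℝ) : ℂ) ∂ν :=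
          integral_congr_ae (Filter.Eventually.of_forall fun z => hmc z)
      _ = ((∫ z, ‖f z‖ ^ 2 ∂ν : ℝ) : ℂ) := integral_ofReal (f := fun z => ‖f z‖ ^ 2)
  have hint2 : Integrable (fun z => ‖f z‖ ^ 2) ν := by
    have := hff.norm
    refine this.congr (Filter.Eventually.of_forall fun z => ?_)
    beta_reduce
    rw [hmc z]
    simp [abs_of_nonneg (sq_nonneg ‖f z‖)]
  have hr0 : 0 ≤ ∫ z, ‖f z‖ ^ 2 ∂ν :=
    integral_nonneg fun z => sq_nonneg _
  have hrM : (∫ z, ‖f z‖ ^ 2 ∂ν) ≤ M ^ 2 := by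
    have hle : (∫ z, ‖f z‖ ^ 2 ∂ν) ≤ ∫ _z, M ^ 2 ∂ν := by
      refine integral_mono_ae hint2 (integrable_const _) ?_
      filter_upwards [haef] with z hz
      exact pow_le_pow_left₀ (norm_nonneg _) hz 2
    simpa using hle
  -- combine
  have hkey : ((Nat.factorial N : ℕ) : ℝ) * ‖(Matrix.of fun i j =>
      ∫ z, eval z (e i) * (starRingEnd ℂ) (eval z (e j)) ∂μ).det‖
      = ∫ z, ‖f z‖ ^ 2 ∂ν := by
    have h1 : ‖((Nat.factorial N : ℕ) : ℂ) * (Matrix.of fun i j =>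
        ∫ x, g i x * (starRingEnd ℂ) (g j x) ∂μ).det‖
        = ((Nat.factorial N : ℕ) : ℝ) * ‖(Matrix.of fun i j =>
        ∫ x, g i x * (starRingEnd ℂ) (g j x) ∂μ).det‖ := by
      rw [norm_mul]
      norm_num
    rw [← h1, hand, hreal]
    rw [Complex.norm_real]
    exact abs_of_nonneg hr0
  have hfac1 : (1 : ℝ) ≤ ((Nat.factorial N : ℕ) : ℝ) := by
    exact_mod_cast Nat.one_le_iff_ne_zero.mpr (Nat.factorial_ne_zero N)
  have hnn : 0 ≤ ‖(Matrix.of fun i j =>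
      ∫ z, eval z (e i) * (starRingEnd ℂ) (eval z (e j)) ∂μ).det‖ := norm_nonneg _
  nlinarith [hkey, hrM, hfac1, hnn]
end

section
/- Let A ⊆ E be a norming set for degree-≤k polynomials with constant C and cardinality M, and μ the uniform probability measure on A. Then det G_k(μ, M_k) ≥ (C√M)^{-2N} · (max_{ζ₁,…,ζ_N ∈ E} |Vdm_k(ζ₁,…,ζ_N)|)², where N is the dimension of the polynomial space and Vdm_k the Vandermonde determinant in the monomial basis. -/
open MvPolynomial
open Matrix

open Finset Equiv.Perm in
lemma myCB_expand {N : ℕ} {α : Type*} [Fintype α] [DecidableEq α]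
    (V : Matrix (Fin N) α ℂ) (W : Matrix α (Fin N) ℂ) :
    (V * W).det = ∑ p : Fin N → α, (V.submatrix id p).det * ∏ x, W (p x) x := by
  have h1 : (V * W).det
      = ∑ p : Fin N → α, ∑ σ : Equiv.Perm (Fin N),
          ((Equiv.Perm.sign σ : ℤ) : ℂ) * ∏ i, V (σ i) (p i) * W (p i) i := by
    simp only [Matrix.det_apply', Matrix.mul_apply, prod_univ_sum, mul_sum,
      Fintype.piFinset_univ]
    rw [Finset.sum_comm]
  rw [h1]
  refine Finset.sum_congr rfl fun p _ => ?_
  rw [Matrix.det_apply', Finset.sum_mul]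
  refine Finset.sum_congr rfl fun σ _ => ?_
  rw [Finset.prod_mul_distrib]
  simp [Matrix.submatrix_apply, mul_assoc]

open Finset Matrix in
lemma myCB_fiber {N : ℕ} {α : Type*} [Fintype α] [DecidableEq α]
    (V : Matrix (Fin N) α ℂ) (p₀ : Fin N → α) (hp₀ : Function.Injective p₀) :
    ∑ p ∈ Finset.univ.filter (fun p : Fin N → α =>
        Finset.univ.image p = Finset.univ.image p₀),
      (V.submatrix id p).det * ∏ x, Vᴴ (p x) x
      = (Complex.normSq (V.submatrix id p₀).det : ℂ) := by
  have himτ : ∀ τ : Equiv.Perm (Fin N), (Finset.univ.image (p₀ ∘ τ) : Finset α)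
      = Finset.univ.image p₀ := by
    intro τ
    rw [← Finset.image_image]
    congr 1
    exact Finset.eq_univ_of_forall fun x =>
      Finset.mem_image.mpr ⟨τ.symm x, Finset.mem_univ _, τ.apply_symm_apply x⟩
  have hbij : ∑ p ∈ Finset.univ.filter (fun p : Fin N → α =>
        Finset.univ.image p = Finset.univ.image p₀),
      (V.submatrix id p).det * ∏ x, Vᴴ (p x) x
      = ∑ τ : Equiv.Perm (Fin N),
          (V.submatrix id (p₀ ∘ τ)).det * ∏ x, Vᴴ ((p₀ ∘ τ) x) x := by
    refine (Finset.sum_bij (fun (τ : Equiv.Perm (Fin N)) _ => p₀ ∘ τ) ?_ ?_ ?_ ?_).symm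
    · intro τ _
      exact Finset.mem_filter.mpr ⟨Finset.mem_univ _, himτ τ⟩
    · intro τ₁ _ τ₂ _ h
      exact Equiv.ext fun x => hp₀ (congrFun h x)
    · intro p hp
      obtain ⟨-, him⟩ := Finset.mem_filter.mp hp
      have hpinj : Function.Injective p := by
        have hcard : (Finset.univ.image p).card = (Finset.univ : Finset (Fin N)).card := by
          rw [him, Finset.card_image_of_injective _ hp₀]
        rw [Finset.card_image_iff] at hcard
        rw [← Set.injOn_univ]
        rwa [Finset.coe_univ] at hcard
      have hr : Set.range p = Set.range p₀ := by
        rw [← Set.image_univ, ← Set.image_univ, ← Finset.coe_univ, ← Finset.coe_image,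
          ← Finset.coe_image, him]
      refine ⟨(Equiv.ofInjective p hpinj).trans ((Equiv.setCongr hr).trans
        (Equiv.ofInjective p₀ hp₀).symm), Finset.mem_univ _, ?_⟩
      funext x
      have : ∀ y : Set.range p₀, p₀ ((Equiv.ofInjective p₀ hp₀).symm y) = ↑y := fun y => by
        conv_rhs => rw [← Equiv.apply_symm_apply (Equiv.ofInjective p₀ hp₀) y]
        rfl
      simpa using this ⟨p x, hr ▸ Set.mem_range_self x⟩
    · intro τ _; rfl
  rw [hbij]
  have hperm : ∀ τ : Equiv.Perm (Fin N), (V.submatrix id (p₀ ∘ τ)).det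
      = (Equiv.Perm.sign τ : ℂ) * (V.submatrix id p₀).det := by
    intro τ
    have : V.submatrix id (p₀ ∘ τ) = (V.submatrix id p₀).submatrix id τ := by
      rw [Matrix.submatrix_submatrix]; rfl
    rw [this, Matrix.det_permute']
  have hconj : ∑ τ : Equiv.Perm (Fin N),
      ((Equiv.Perm.sign τ : ℤ) : ℂ) * ∏ x, Vᴴ (p₀ (τ x)) x
      = (starRingEnd ℂ) (V.submatrix id p₀).det := by
    rw [RingHom.map_det, ← Matrix.det_transpose, Matrix.det_apply']
    refine Finset.sum_congr rfl fun τ _ => ?_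
    simp [Matrix.conjTranspose_apply, Matrix.transpose_apply, Matrix.map_apply,
      Matrix.submatrix_apply]
  calc ∑ τ : Equiv.Perm (Fin N),
        (V.submatrix id (p₀ ∘ τ)).det * ∏ x, Vᴴ ((p₀ ∘ τ) x) x
      = (V.submatrix id p₀).det * ∑ τ : Equiv.Perm (Fin N),
          ((Equiv.Perm.sign τ : ℤ) : ℂ) * ∏ x, Vᴴ (p₀ (τ x)) x := by
        rw [Finset.mul_sum]
        refine Finset.sum_congr rfl fun τ _ => ?_
        rw [hperm τ]
        ring_nf
        rfl
    _ = (V.submatrix id p₀).det * (starRingEnd ℂ) (V.submatrix id p₀).det := by rw [hconj]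
    _ = (Complex.normSq (V.submatrix id p₀).det : ℂ) := Complex.mul_conj _

open Finset Matrix in
lemma myCB_key {N : ℕ} {α : Type*} [Fintype α] [DecidableEq α]
    (V : Matrix (Fin N) α ℂ) (ps : Fin N → α)
    (hexp : (V * Vᴴ).det = ∑ p : Fin N → α, (V.submatrix id p).det * ∏ x, Vᴴ (p x) x)
    (hfib : ∀ p₀ : Fin N → α, Function.Injective p₀ →
      ∑ p ∈ Finset.univ.filter (fun p : Fin N → α =>
          Finset.univ.image p = Finset.univ.image p₀),
        (V.submatrix id p).det * ∏ x, Vᴴ (p x) x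
        = (Complex.normSq (V.submatrix id p₀).det : ℂ)) :
    ‖(V.submatrix id ps).det‖ ^ 2 ≤ ‖(V * Vᴴ).det‖ := by
  by_cases hinj : Function.Injective ps
  · -- main case
    set F : Finset α → ℂ := fun s => ∑ p ∈ Finset.univ.filter (fun p : Fin N → α =>
        Finset.univ.image p = s), (V.submatrix id p).det * ∏ x, Vᴴ (p x) x with hF
    have hdet : (V * Vᴴ).det = ∑ s : Finset α, F s := by
      rw [hexp, ← Finset.sum_fiberwise_of_maps_to (g := fun p : Fin N → α =>
        Finset.univ.image p) (fun _ _ => Finset.mem_univ _) _]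
    have h0 : ∀ s : Finset α, ∃ r : ℝ, 0 ≤ r ∧ F s = (r : ℂ) ∧
        (Finset.univ.image ps = s → r = ‖(V.submatrix id ps).det‖ ^ 2) := by
      intro s
      by_cases hs : ∃ p₀ : Fin N → α, Function.Injective p₀ ∧ Finset.univ.image p₀ = s
      · obtain ⟨p₀, hp₀, hps⟩ := hs
        refine ⟨Complex.normSq (V.submatrix id p₀).det, Complex.normSq_nonneg _, ?_, ?_⟩
        · rw [hF]; simp only [← hps]; exact hfib p₀ hp₀
        · intro him
          have h1 := hfib p₀ hp₀
          have h2 := hfib ps hinj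
          rw [hps, ← him] at h1
          have := h1.symm.trans h2
          have hr : Complex.normSq (V.submatrix id p₀).det
              = Complex.normSq (V.submatrix id ps).det := by exact_mod_cast this
          rw [hr, ← Complex.sq_norm]
      · refine ⟨0, le_rfl, ?_, fun him => absurd ⟨ps, hinj, him⟩ hs⟩
        rw [hF]
        push_cast
        refine Finset.sum_eq_zero fun p hp => ?_
        obtain ⟨-, him⟩ := Finset.mem_filter.mp hp
        have hpninj : ¬ Function.Injective p := fun h => hs ⟨p, h, him⟩
        have : (V.submatrix id p).det = 0 := by
          rw [Function.not_injective_iff] at hpninj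
          obtain ⟨i, j, hij, hne⟩ := hpninj
          exact Matrix.det_zero_of_column_eq hne fun k => by simp [hij]
        rw [this, zero_mul]
    choose r hr0 hrF hrEq using h0
    have hre : (V * Vᴴ).det.re = ∑ s : Finset α, r s := by
      rw [hdet, Complex.re_sum]
      exact Finset.sum_congr rfl fun s _ => by rw [hrF s, Complex.ofReal_re]
    calc ‖(V.submatrix id ps).det‖ ^ 2 = r (Finset.univ.image ps) :=
          (hrEq _ rfl).symm
      _ ≤ ∑ s : Finset α, r s :=
          Finset.single_le_sum (fun s _ => hr0 s) (Finset.mem_univ _)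
      _ = (V * Vᴴ).det.re := hre.symm
      _ ≤ ‖(V * Vᴴ).det‖ := Complex.re_le_norm _
  · rw [Function.not_injective_iff] at hinj
    obtain ⟨i, j, hij, hne⟩ := hinj
    have : (V.submatrix id ps).det = 0 :=
      Matrix.det_zero_of_column_eq hne fun k => by simp [hij]
    rw [this]
    simpa using norm_nonneg _

open MvPolynomial in
lemma myCol {n k N : ℕ} (E : Set (Fin n → ℂ))
    (A : Finset (Fin n → ℂ)) (hAE : ↑A ⊆ E) (hA : A.Nonempty)
    (C : ℝ) (hC : 0 < C) (hC1 : 1 ≤ C)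
    (hnorm : ∀ p : MvPolynomial (Fin n) ℂ, p.totalDegree ≤ k →
      ∀ z ∈ E, ‖eval z p‖ ≤ C * A.sup' hA fun a => ‖eval a p‖)
    (e : Fin N → MvPolynomial (Fin n) ℂ)
    (hdeg : ∀ i, (e i).totalDegree ≤ k)
    (T : ℝ) (hT0 : 0 ≤ T)
    (hT : ∀ p : Fin N → {x // x ∈ A},
      ‖(Matrix.of fun i j => eval (↑(p j) : Fin n → ℂ) (e i)
        : Matrix (Fin N) (Fin N) ℂ).det‖ ≤ T) :
    ∀ m : ℕ, ∀ ζ : Fin N → (Fin n → ℂ), (∀ j, ζ j ∈ E) → (∀ j : Fin N, m ≤ (j : ℕ) → ζ j ∈ A) →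
      ‖(Matrix.of fun i j => eval (ζ j) (e i) : Matrix (Fin N) (Fin N) ℂ).det‖ ≤ C ^ m * T := by
  intro m
  induction m with
  | zero =>
    intro ζ hζE hζA
    rw [pow_zero, one_mul]
    exact hT fun j => ⟨ζ j, hζA j (Nat.zero_le _)⟩
  | succ m IH =>
    intro ζ hζE hζA
    by_cases hmN : m < N
    · set j₀ : Fin N := ⟨m, hmN⟩ with hj₀
      have hj₀val : (j₀ : ℕ) = m := rfl
      set M₀ : Matrix (Fin N) (Fin N) ℂ := Matrix.of fun i j => eval (ζ j) (e i) with hM₀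
      set c : Fin N → ℂ := fun i => M₀.cramer (Pi.single i 1) j₀ with hc
      set q : MvPolynomial (Fin n) ℂ := ∑ i, MvPolynomial.C (c i) * e i with hqdef
      have hq : q.totalDegree ≤ k :=
        (MvPolynomial.totalDegree_finset_sum _ _).trans (Finset.sup_le fun i _ =>
          (MvPolynomial.totalDegree_mul _ _).trans
            (by simpa [MvPolynomial.totalDegree_C] using hdeg i))
      have hvq : ∀ z, eval z q = (M₀.updateCol j₀ fun i => eval z (e i)).det := by
        intro z
        have hv : (fun i => eval z (e i)) = ∑ i : Fin N, eval z (e i) • (Pi.single i 1 : Fin N → ℂ) := by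
          funext j
          rw [Finset.sum_apply]
          simp [Pi.single_apply]
        calc eval z q = ∑ i, c i * eval z (e i) := by simp [hqdef]
          _ = ∑ i, (M₀.cramer (eval z (e i) • (Pi.single i 1 : Fin N → ℂ))) j₀ := by
              refine Finset.sum_congr rfl fun i _ => ?_
              rw [LinearMap.map_smul, Pi.smul_apply, smul_eq_mul, hc, mul_comm]
          _ = (M₀.cramer (∑ i, eval z (e i) • (Pi.single i 1 : Fin N → ℂ))) j₀ := by
              rw [map_sum (M₀.cramer) _ Finset.univ, Finset.sum_apply]
          _ = (M₀.cramer (fun i => eval z (e i))) j₀ := by rw [← hv]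
          _ = (M₀.updateCol j₀ fun i => eval z (e i)).det := by rw [Matrix.cramer_apply]
      have key1 : M₀.det = eval (ζ j₀) q := by
        conv_lhs => rw [← Matrix.updateCol_eq_self M₀ j₀]
        exact (hvq (ζ j₀)).symm
      obtain ⟨a₀, ha₀A, hsup⟩ := Finset.exists_mem_eq_sup' hA fun a => ‖eval a q‖
      have key2 : eval a₀ q
          = (Matrix.of fun i j => eval (Function.update ζ j₀ a₀ j) (e i)
              : Matrix (Fin N) (Fin N) ℂ).det := by
        rw [hvq a₀]
        congr 1
        ext i j
        by_cases hj : j = j₀ <;>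
          simp [Matrix.updateCol_apply, Function.update_apply, hj, hM₀]
      have hIH := IH (Function.update ζ j₀ a₀)
        (fun j => by
          by_cases hj : j = j₀
          · rw [hj, Function.update_self]; exact hAE ha₀A
          · rw [Function.update_of_ne hj]; exact hζE j)
        (fun j hj => by
          by_cases hjj : j = j₀
          · rw [hjj, Function.update_self]; exact ha₀A
          · have : m + 1 ≤ (j : ℕ) := by
              rcases Nat.lt_or_ge (j : ℕ) (m + 1) with h | h
              · exfalso; exact hjj (Fin.ext (by rw [hj₀val]; omega))
              · exact h
            rw [Function.update_of_ne hjj]; exact hζA j this)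
      calc ‖M₀.det‖ = ‖eval (ζ j₀) q‖ := by rw [key1]
        _ ≤ C * A.sup' hA fun a => ‖eval a q‖ := hnorm q hq (ζ j₀) (hζE j₀)
        _ = C * ‖eval a₀ q‖ := by rw [hsup]
        _ ≤ C * (C ^ m * T) := by
            refine mul_le_mul_of_nonneg_left ?_ hC.le
            rw [key2]; exact hIH
        _ = C ^ (m + 1) * T := by ring
    · have := IH ζ hζE fun j hj => hζA j (by omega)
      calc ‖(Matrix.of fun i j => eval (ζ j) (e i) : Matrix (Fin N) (Fin N) ℂ).det‖
          ≤ C ^ m * T := this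
        _ ≤ C ^ (m + 1) * T :=
            mul_le_mul_of_nonneg_right (pow_le_pow_right₀ hC1 (Nat.le_succ m)) hT0

/-- For a norming set `A ⊆ E` with constant `C` and cardinality `M` and the
uniform probability measure on `A`, the Gram determinant satisfies
`det G_k(μ) ≥ (C√M)^{-2N} (max_{ζ's ∈ E} |Vdm_k|)²`. -/
theorem stmt13 {n k N : ℕ} (E : Set (Fin n → ℂ)) (hE : IsCompact E)
    (A : Finset (Fin n → ℂ)) (hAE : ↑A ⊆ E) (hA : A.Nonempty)
    (C : ℝ) (hC : 0 < C)
    (hnorm : ∀ p : MvPolynomial (Fin n) ℂ, p.totalDegree ≤ k →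
      ∀ z ∈ E, ‖eval z p‖ ≤ C * A.sup' hA fun a => ‖eval a p‖)
    (e : Fin N → MvPolynomial (Fin n) ℂ)
    (hdeg : ∀ i, (e i).totalDegree ≤ k) :
    ((C * Real.sqrt A.card) ^ (2 * N))⁻¹ *
        (sSup {x : ℝ | ∃ ζ : Fin N → (Fin n → ℂ), (∀ j, ζ j ∈ E) ∧
          x = ‖(Matrix.of fun i j => eval (ζ j) (e i)).det‖}) ^ 2
      ≤ ‖(Matrix.of fun i j => (A.card : ℂ)⁻¹ *
          ∑ a ∈ A, eval a (e i) * (starRingEnd ℂ) (eval a (e j))).det‖ := by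
  classical
  have hMpos : 0 < A.card := Finset.card_pos.mpr hA
  haveI : Nonempty {x // x ∈ A} := ⟨⟨hA.choose, hA.choose_spec⟩⟩
  set V : Matrix (Fin N) {x // x ∈ A} ℂ :=
    Matrix.of fun i a => eval (a : Fin n → ℂ) (e i) with hV
  have hune : (Finset.univ : Finset (Fin N → {x // x ∈ A})).Nonempty :=
    Finset.univ_nonempty
  set T : ℝ := Finset.univ.sup' hune fun p : Fin N → {x // x ∈ A} =>
      ‖(V.submatrix id p).det‖ with hTdef
  have hTle : ∀ p : Fin N → {x // x ∈ A}, ‖(V.submatrix id p).det‖ ≤ T := by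
    intro p
    rw [hTdef]
    exact Finset.le_sup' (fun p : Fin N → {x // x ∈ A} => ‖(V.submatrix id p).det‖)
      (Finset.mem_univ p)
  have hT0 : 0 ≤ T := le_trans (norm_nonneg _) (hTle (Classical.arbitrary _))
  have hC1 : 1 ≤ C := by
    have h := hnorm 1 (by simp) hA.choose (hAE hA.choose_spec)
    simpa [Finset.sup'_const] using h
  have hcol := myCol E A hAE hA C hC hC1 hnorm e hdeg T hT0 (fun p => hTle p)
  have hSle : sSup {x : ℝ | ∃ ζ : Fin N → (Fin n → ℂ), (∀ j, ζ j ∈ E) ∧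
      x = ‖(Matrix.of fun i j => eval (ζ j) (e i)).det‖} ≤ C ^ N * T := by
    refine Real.sSup_le (fun x hx => ?_) (by positivity)
    obtain ⟨ζ, hζ, rfl⟩ := hx
    exact hcol N ζ hζ (fun j hj => absurd j.isLt (by omega))
  have hS0 : 0 ≤ sSup {x : ℝ | ∃ ζ : Fin N → (Fin n → ℂ), (∀ j, ζ j ∈ E) ∧
      x = ‖(Matrix.of fun i j => eval (ζ j) (e i)).det‖} := by
    refine Real.sSup_nonneg (fun x hx => ?_)
    obtain ⟨ζ, hζ, rfl⟩ := hx
    exact norm_nonneg _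
  obtain ⟨ps, -, hps⟩ := Finset.exists_mem_eq_sup' hune
    fun p : Fin N → {x // x ∈ A} => ‖(V.submatrix id p).det‖
  have hkey : T ^ 2 ≤ ‖(V * Vᴴ).det‖ := by
    rw [hTdef, hps]
    exact myCB_key V ps (myCB_expand V Vᴴ) (fun p₀ h => myCB_fiber V p₀ h)
  have hG : (Matrix.of fun i j => (A.card : ℂ)⁻¹ *
        ∑ a ∈ A, eval a (e i) * (starRingEnd ℂ) (eval a (e j)))
      = ((A.card : ℂ)⁻¹) • (V * Vᴴ) := by
    ext i j
    simp only [Matrix.smul_apply, Matrix.of_apply, Matrix.mul_apply, smul_eq_mul]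
    congr 1
    rw [← Finset.sum_coe_sort A (fun a => eval a (e i) * (starRingEnd ℂ) (eval a (e j)))]
    refine Finset.sum_congr rfl fun a _ => ?_
    simp [Matrix.conjTranspose_apply, hV]
  have hdetG : ‖(Matrix.of fun i j => (A.card : ℂ)⁻¹ *
        ∑ a ∈ A, eval a (e i) * (starRingEnd ℂ) (eval a (e j))).det‖
      = ((A.card : ℝ)⁻¹) ^ N * ‖(V * Vᴴ).det‖ := by
    rw [hG, Matrix.det_smul, Fintype.card_fin, norm_mul, norm_pow, norm_inv,
      Complex.norm_natCast]
  rw [hdetG]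
  have hMR : (0 : ℝ) < (A.card : ℝ) := by exact_mod_cast hMpos
  have hpow : (C * Real.sqrt A.card) ^ (2 * N) = C ^ (2 * N) * (A.card : ℝ) ^ N := by
    rw [mul_pow]
    congr 1
    rw [pow_mul, Real.sq_sqrt (by positivity)]
  calc ((C * Real.sqrt A.card) ^ (2 * N))⁻¹ *
        (sSup {x : ℝ | ∃ ζ : Fin N → (Fin n → ℂ), (∀ j, ζ j ∈ E) ∧
          x = ‖(Matrix.of fun i j => eval (ζ j) (e i)).det‖}) ^ 2
      ≤ ((C * Real.sqrt A.card) ^ (2 * N))⁻¹ * (C ^ N * T) ^ 2 := by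
        refine mul_le_mul_of_nonneg_left ?_ (by positivity)
        exact pow_le_pow_left₀ hS0 hSle 2
    _ = ((A.card : ℝ)⁻¹) ^ N * T ^ 2 := by
        rw [hpow]
        field_simp
        rw [one_div, inv_pow, ← pow_mul, mul_comm N 2, mul_right_comm _ ((A.card : ℝ) ^ N),
          mul_assoc _ ((A.card : ℝ) ^ N), mul_inv_cancel₀ (pow_ne_zero _ hMR.ne'), mul_one]
    _ ≤ ((A.card : ℝ)⁻¹) ^ N * ‖(V * Vᴴ).det‖ := by
        refine mul_le_mul_of_nonneg_left hkey (by positivity)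
end
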